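/- arXiv:2209.14920 — 7 statements merged into one kernel-verified Lean document; each statement's English description precedes it below -/
import Mathlib

section
/- Let X₁(u,v) = (x(u)cos v, x(u)sin v, z(u), w(u)+λv) and R(u,v) = (√(x²-λ²)cos(v-∫λw'/(x²-λ²)du), √(x²-λ²)sin(v-∫λw'/(x²-λ²)du), ∫ a x x'/√(x²-λ²) du, ∫ b x x'/√(x²-λ²) du), where x(u)²>λ², x'(u)≠0, and a, b are smooth functions satisfying a² - b² = (x²(z'²-w'²) - λ²(x'²+z'²))/(x²x'²). Then X₁ and R are isometric, i.e., their induced metrics from E⁴₁ agree: ⟨X₁_u,X₁_u⟩du² + 2⟨X₁_u,X₁_v⟩dudv + ⟨X₁_v,X₁_v⟩dv² = ⟨R_u,R_u⟩du² + 2⟨R_u,R_v⟩dudv + ⟨R_v,R_v⟩dv² as quadratic forms at each point. -/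
noncomputable section

/-- Minkowski inner product on ℝ⁴ with signature (+,+,+,-). -/
def mdot (p q : ℝ × ℝ × ℝ × ℝ) : ℝ :=
  p.1 * q.1 + p.2.1 * q.2.1 + p.2.2.1 * q.2.2.1 - p.2.2.2 * q.2.2.2

/-- Partial derivative of a parametrized surface in the first parameter. -/
def pderivU (X : ℝ → ℝ → ℝ × ℝ × ℝ × ℝ) (u v : ℝ) : ℝ × ℝ × ℝ × ℝ :=
  (deriv (fun t => (X t v).1) u, deriv (fun t => (X t v).2.1) u,
   deriv (fun t => (X t v).2.2.1) u, deriv (fun t => (X t v).2.2.2) u)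

/-- Partial derivative of a parametrized surface in the second parameter. -/
def pderivV (X : ℝ → ℝ → ℝ × ℝ × ℝ × ℝ) (u v : ℝ) : ℝ × ℝ × ℝ × ℝ :=
  (deriv (fun s => (X u s).1) v, deriv (fun s => (X u s).2.1) v,
   deriv (fun s => (X u s).2.2.1) v, deriv (fun s => (X u s).2.2.2) v)

/-- Algebraic identity for the coefficient E of the first fundamental form. -/
lemma bourE (X X' Z' W' A B C S Ct St f lam : ℝ)
    (hf2 : f ^ 2 = X ^ 2 - lam ^ 2) (hfne : f ≠ 0) (hPne : X ^ 2 - lam ^ 2 ≠ 0)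
    (hXne : X ≠ 0) (hX'ne : X' ≠ 0)
    (hcs1 : S ^ 2 + C ^ 2 = 1) (hcs2 : St ^ 2 + Ct ^ 2 = 1)
    (hab' : A ^ 2 - B ^ 2 =
      (X ^ 2 * (Z' ^ 2 - W' ^ 2) - lam ^ 2 * (X' ^ 2 + Z' ^ 2)) / (X ^ 2 * X' ^ 2)) :
    X' * C * (X' * C) + X' * S * (X' * S) + Z' * Z' - W' * W' =
      (2 * X * X' / (2 * f) * Ct + f * (-St * -(lam * W' / (X ^ 2 - lam ^ 2)))) *
        (2 * X * X' / (2 * f) * Ct + f * (-St * -(lam * W' / (X ^ 2 - lam ^ 2)))) +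
      (2 * X * X' / (2 * f) * St + f * (Ct * -(lam * W' / (X ^ 2 - lam ^ 2)))) *
        (2 * X * X' / (2 * f) * St + f * (Ct * -(lam * W' / (X ^ 2 - lam ^ 2)))) +
      (A * X * X' / f) * (A * X * X' / f) - (B * X * X' / f) * (B * X * X' / f) := by
  field_simp at hab' ⊢
  linear_combination (X'^2*f^2*(X^2-lam^2)^2) * hcs1
    - (X^2*X'^2*(X^2-lam^2)^2 + f^4*lam^2*W'^2) * hcs2
    + (-(lam^2*W'^2*(f^2+(X^2-lam^2))) + (X^2-lam^2)^2*(X'^2+Z'^2-W'^2)) * hf2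
    - ((X^2-lam^2)^2) * hab'

/-- Algebraic identity for the coefficient F of the first fundamental form. -/
lemma bourF (X X' Z' W' A B C S Ct St f lam : ℝ)
    (hf2 : f ^ 2 = X ^ 2 - lam ^ 2) (hfne : f ≠ 0) (hPne : X ^ 2 - lam ^ 2 ≠ 0)
    (hcs2 : St ^ 2 + Ct ^ 2 = 1) :
    X' * C * (X * -S) + X' * S * (X * C) + Z' * 0 - W' * lam =
      (2 * X * X' / (2 * f) * Ct + f * (-St * -(lam * W' / (X ^ 2 - lam ^ 2)))) * (f * (-St * 1)) +
      (2 * X * X' / (2 * f) * St + f * (Ct * -(lam * W' / (X ^ 2 - lam ^ 2)))) * (f * (Ct * 1)) +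
      (A * X * X' / f) * 0 - (B * X * X' / f) * 0 := by
  field_simp
  linear_combination (f^3*lam*W') * hcs2 + (f*lam*W') * hf2

/-- Algebraic identity for the coefficient G of the first fundamental form. -/
lemma bourG (X C S Ct St f lam : ℝ) (hf2 : f ^ 2 = X ^ 2 - lam ^ 2)
    (hcs1 : S ^ 2 + C ^ 2 = 1) (hcs2 : St ^ 2 + Ct ^ 2 = 1) :
    X * -S * (X * -S) + X * C * (X * C) + 0 * 0 - lam * lam =
      f * (-St * 1) * (f * (-St * 1)) + f * (Ct * 1) * (f * (Ct * 1)) + 0 * 0 - 0 * 0 := by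
  linear_combination X ^ 2 * hcs1 - hf2 - f ^ 2 * hcs2

/-- Bour isometry of the type I helicoidal surface with a rotational surface
with circular profile. -/
theorem stmt2 (x z w a b phi s r : ℝ → ℝ) (lam : ℝ) (hlam : 0 < lam)
    (hx : ContDiff ℝ (⊤ : ℕ∞) x) (hz : ContDiff ℝ (⊤ : ℕ∞) z) (hw : ContDiff ℝ (⊤ : ℕ∞) w)
    (ha : ContDiff ℝ (⊤ : ℕ∞) a) (hb : ContDiff ℝ (⊤ : ℕ∞) b)
    (hx2 : ∀ u, (x u) ^ 2 > lam ^ 2) (hx' : ∀ u, deriv x u ≠ 0)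
    (hphi : ∀ u, HasDerivAt phi (lam * deriv w u / ((x u) ^ 2 - lam ^ 2)) u)
    (hs : ∀ u, HasDerivAt s (a u * x u * deriv x u / Real.sqrt ((x u) ^ 2 - lam ^ 2)) u)
    (hr : ∀ u, HasDerivAt r (b u * x u * deriv x u / Real.sqrt ((x u) ^ 2 - lam ^ 2)) u)
    (hab : ∀ u, (a u) ^ 2 - (b u) ^ 2 =
      ((x u) ^ 2 * ((deriv z u) ^ 2 - (deriv w u) ^ 2)
        - lam ^ 2 * ((deriv x u) ^ 2 + (deriv z u) ^ 2)) / ((x u) ^ 2 * (deriv x u) ^ 2))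
    (X R : ℝ → ℝ → ℝ × ℝ × ℝ × ℝ)
    (hX : ∀ u v, X u v = (x u * Real.cos v, x u * Real.sin v, z u, w u + lam * v))
    (hR : ∀ u v, R u v =
      (Real.sqrt ((x u) ^ 2 - lam ^ 2) * Real.cos (v - phi u),
       Real.sqrt ((x u) ^ 2 - lam ^ 2) * Real.sin (v - phi u), s u, r u)) :
    ∀ u v,
      mdot (pderivU X u v) (pderivU X u v) = mdot (pderivU R u v) (pderivU R u v) ∧
      mdot (pderivU X u v) (pderivV X u v) = mdot (pderivU R u v) (pderivV R u v) ∧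
      mdot (pderivV X u v) (pderivV X u v) = mdot (pderivV R u v) (pderivV R u v) := by
  intro u v
  have hxd : HasDerivAt x (deriv x u) u := (hx.differentiable (by simp) u).hasDerivAt
  have hzd : HasDerivAt z (deriv z u) u := (hz.differentiable (by simp) u).hasDerivAt
  have hwd : HasDerivAt w (deriv w u) u := (hw.differentiable (by simp) u).hasDerivAt
  have hPpos : (0:ℝ) < x u ^ 2 - lam ^ 2 := sub_pos.mpr (hx2 u)
  have hPne : x u ^ 2 - lam ^ 2 ≠ 0 := ne_of_gt hPpos
  have hfpos : 0 < Real.sqrt (x u ^ 2 - lam ^ 2) := Real.sqrt_pos.mpr hPpos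
  have hfne : Real.sqrt (x u ^ 2 - lam ^ 2) ≠ 0 := ne_of_gt hfpos
  have hf2 : Real.sqrt (x u ^ 2 - lam ^ 2) ^ 2 = x u ^ 2 - lam ^ 2 := Real.sq_sqrt hPpos.le
  -- partial derivatives of X
  have hXu : pderivU X u v
      = (deriv x u * Real.cos v, deriv x u * Real.sin v, deriv z u, deriv w u) := by
    unfold pderivU
    simp only [hX]
    rw [(hxd.mul_const (Real.cos v)).deriv, (hxd.mul_const (Real.sin v)).deriv,
      hzd.deriv, (hwd.add_const (lam * v)).deriv]
  have hXv : pderivV X u v = (x u * (-Real.sin v), x u * Real.cos v, 0, lam) := by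
    unfold pderivV
    simp only [hX]
    have h4 : HasDerivAt (fun sv : ℝ => w u + lam * sv) lam v := by
      simpa using ((hasDerivAt_id v).const_mul lam).const_add (w u)
    rw [((Real.hasDerivAt_cos v).const_mul (x u)).deriv,
      ((Real.hasDerivAt_sin v).const_mul (x u)).deriv, deriv_const, h4.deriv]
  -- partial derivatives of R
  have hq : HasDerivAt (fun t => x t ^ 2 - lam ^ 2) (2 * x u * deriv x u) u := by
    simpa [mul_comm, mul_assoc] using (hxd.pow 2).sub_const (lam ^ 2)
  have hfd : HasDerivAt (fun t => Real.sqrt (x t ^ 2 - lam ^ 2))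
      (2 * x u * deriv x u / (2 * Real.sqrt (x u ^ 2 - lam ^ 2))) u := hq.sqrt hPne
  have hθd : HasDerivAt (fun t => v - phi t)
      (-(lam * deriv w u / (x u ^ 2 - lam ^ 2))) u := (hphi u).const_sub v
  have hRu : pderivU R u v =
      (2 * x u * deriv x u / (2 * Real.sqrt (x u ^ 2 - lam ^ 2)) * Real.cos (v - phi u)
        + Real.sqrt (x u ^ 2 - lam ^ 2) *
          (-Real.sin (v - phi u) * -(lam * deriv w u / (x u ^ 2 - lam ^ 2))),
       2 * x u * deriv x u / (2 * Real.sqrt (x u ^ 2 - lam ^ 2)) * Real.sin (v - phi u)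
        + Real.sqrt (x u ^ 2 - lam ^ 2) *
          (Real.cos (v - phi u) * -(lam * deriv w u / (x u ^ 2 - lam ^ 2))),
       a u * x u * deriv x u / Real.sqrt (x u ^ 2 - lam ^ 2),
       b u * x u * deriv x u / Real.sqrt (x u ^ 2 - lam ^ 2)) := by
    unfold pderivU
    simp only [hR]
    rw [(show HasDerivAt (fun t => Real.sqrt (x t ^ 2 - lam ^ 2) * Real.cos (v - phi t)) _ u
        from hfd.mul hθd.cos).deriv,
      (show HasDerivAt (fun t => Real.sqrt (x t ^ 2 - lam ^ 2) * Real.sin (v - phi t)) _ u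
        from hfd.mul hθd.sin).deriv, (hs u).deriv, (hr u).deriv]
  have hRv : pderivV R u v =
      (Real.sqrt (x u ^ 2 - lam ^ 2) * (-Real.sin (v - phi u) * 1),
       Real.sqrt (x u ^ 2 - lam ^ 2) * (Real.cos (v - phi u) * 1), 0, 0) := by
    unfold pderivV
    simp only [hR]
    have h1 : HasDerivAt (fun sv : ℝ => sv - phi u) 1 v := (hasDerivAt_id v).sub_const _
    rw [(h1.cos.const_mul _).deriv, (h1.sin.const_mul _).deriv, deriv_const, deriv_const]
  rw [hXu, hXv, hRu, hRv]
  have hcs1 : Real.sin v ^ 2 + Real.cos v ^ 2 = 1 := Real.sin_sq_add_cos_sq v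
  have hcs2 : Real.sin (v - phi u) ^ 2 + Real.cos (v - phi u) ^ 2 = 1 :=
    Real.sin_sq_add_cos_sq _
  have hxne : x u ≠ 0 := by
    intro h; have := hx2 u; rw [h] at this; nlinarith
  simp only [mdot]
  exact ⟨bourE (x u) (deriv x u) (deriv z u) (deriv w u) (a u) (b u) (Real.cos v)
      (Real.sin v) (Real.cos (v - phi u)) (Real.sin (v - phi u)) _ lam hf2 hfne hPne
      hxne (hx' u) hcs1 hcs2 (hab u),
    bourF (x u) (deriv x u) (deriv z u) (deriv w u) (a u) (b u) (Real.cos v)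
      (Real.sin v) (Real.cos (v - phi u)) (Real.sin (v - phi u)) _ lam hf2 hfne hPne hcs2,
    bourG (x u) (Real.cos v) (Real.sin v) (Real.cos (v - phi u)) (Real.sin (v - phi u))
      _ lam hf2 hcs1 hcs2⟩
end
end

section
/- Let X₁(u,v) = (x(u)cos v, x(u)sin v, z(u), w(u)+λv) in E⁴₁ with λ>0 and λ² > x(u)². Then the surface R(u,v) whose first two components are -∫ a x x'/√(λ²-x²) du and -∫ b x x'/√(λ²-x²) du and last two components are √(λ²-x²)cosh(v+∫λw'/(λ²-x²)du) and √(λ²-x²)sinh(v+∫λw'/(λ²-x²)du), where a²+b² = ((λ²-x²)(x'²+z'²) - x²(x'²-w'²))/(x²x'²) and x'≠0, has the same induced metric from E⁴₁ as X₁. -/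
noncomputable section

/-- Bour isometry of the type I helicoidal surface (λ² > x²) with a rotational
surface with hyperbolic profile. -/
theorem stmt3 (x z w a b phi n p : ℝ → ℝ) (lam : ℝ) (hlam : 0 < lam)
    (hx : ContDiff ℝ (⊤ : ℕ∞) x) (hz : ContDiff ℝ (⊤ : ℕ∞) z) (hw : ContDiff ℝ (⊤ : ℕ∞) w)
    (ha : ContDiff ℝ (⊤ : ℕ∞) a) (hb : ContDiff ℝ (⊤ : ℕ∞) b)
    (hx2 : ∀ u, lam ^ 2 > (x u) ^ 2) (hx' : ∀ u, deriv x u ≠ 0)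
    (hphi : ∀ u, HasDerivAt phi (lam * deriv w u / (lam ^ 2 - (x u) ^ 2)) u)
    (hn : ∀ u, HasDerivAt n (-(a u * x u * deriv x u / Real.sqrt (lam ^ 2 - (x u) ^ 2))) u)
    (hp : ∀ u, HasDerivAt p (-(b u * x u * deriv x u / Real.sqrt (lam ^ 2 - (x u) ^ 2))) u)
    (hab : ∀ u, (a u) ^ 2 + (b u) ^ 2 =
      ((lam ^ 2 - (x u) ^ 2) * ((deriv x u) ^ 2 + (deriv z u) ^ 2)
        - (x u) ^ 2 * ((deriv x u) ^ 2 - (deriv w u) ^ 2)) / ((x u) ^ 2 * (deriv x u) ^ 2))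
    (X R : ℝ → ℝ → ℝ × ℝ × ℝ × ℝ)
    (hX : ∀ u v, X u v = (x u * Real.cos v, x u * Real.sin v, z u, w u + lam * v))
    (hR : ∀ u v, R u v =
      (n u, p u,
       Real.sqrt (lam ^ 2 - (x u) ^ 2) * Real.cosh (v + phi u),
       Real.sqrt (lam ^ 2 - (x u) ^ 2) * Real.sinh (v + phi u))) :
    ∀ u v,
      mdot (pderivU X u v) (pderivU X u v) = mdot (pderivU R u v) (pderivU R u v) ∧
      mdot (pderivU X u v) (pderivV X u v) = mdot (pderivU R u v) (pderivV R u v) ∧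
      mdot (pderivV X u v) (pderivV X u v) = mdot (pderivV R u v) (pderivV R u v) := by
  intro u v
  have hdx : DifferentiableAt ℝ x u := (hx.differentiable (by simp)).differentiableAt
  have hdz : DifferentiableAt ℝ z u := (hz.differentiable (by simp)).differentiableAt
  have hdw : DifferentiableAt ℝ w u := (hw.differentiable (by simp)).differentiableAt
  have hcdx : Continuous (deriv x) := hx.continuous_deriv (by simp)
  have hcdz : Continuous (deriv z) := hz.continuous_deriv (by simp)
  have hcdw : Continuous (deriv w) := hw.continuous_deriv (by simp)
  have hcx : Continuous x := hx.continuous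
  -- rule out x u = 0
  have hxu : x u ≠ 0 := by
    intro hx0
    have hne : ∀ᶠ t in nhdsWithin u {u}ᶜ, x t ≠ 0 := by
      have hslope := hasDerivAt_iff_tendsto_slope.mp hdx.hasDerivAt
      have h2 : ∀ᶠ s in nhds (deriv x u), s ≠ 0 := eventually_ne_nhds (hx' u)
      filter_upwards [hslope.eventually h2, self_mem_nhdsWithin] with t ht htu hcontra
      apply ht
      simp [slope, hcontra, hx0, sub_eq_zero]
    set num : ℝ → ℝ := fun t =>
      (lam ^ 2 - (x t) ^ 2) * ((deriv x t) ^ 2 + (deriv z t) ^ 2)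
        - (x t) ^ 2 * ((deriv x t) ^ 2 - (deriv w t) ^ 2) with hnum
    have hcnum : Continuous num := by fun_prop
    have heq : ∀ᶠ t in nhdsWithin u {u}ᶜ,
        (fun t => (a t ^ 2 + b t ^ 2) * ((x t) ^ 2 * (deriv x t) ^ 2)) t = num t := by
      filter_upwards [hne] with t ht
      rw [hab t, div_mul_cancel₀]
      exact mul_ne_zero (pow_ne_zero 2 ht) (pow_ne_zero 2 (hx' t))
    have h1 : Filter.Tendsto (fun t => (a t ^ 2 + b t ^ 2) * ((x t) ^ 2 * (deriv x t) ^ 2))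
        (nhdsWithin u {u}ᶜ) (nhds 0) := by
      have : Continuous (fun t => (a t ^ 2 + b t ^ 2) * ((x t) ^ 2 * (deriv x t) ^ 2)) := by
        have := ha.continuous; have := hb.continuous; fun_prop
      have h := (this.tendsto u).mono_left (nhdsWithin_le_nhds (s := {u}ᶜ))
      simpa [hx0] using h
    have h2 : Filter.Tendsto (fun t => (a t ^ 2 + b t ^ 2) * ((x t) ^ 2 * (deriv x t) ^ 2))
        (nhdsWithin u {u}ᶜ) (nhds (num u)) := by
      refine Filter.Tendsto.congr' ?_ ((hcnum.tendsto u).mono_left nhdsWithin_le_nhds)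
      filter_upwards [heq] with t ht using ht.symm
    have h0 : num u = 0 := tendsto_nhds_unique h2 h1
    have hxd := hx' u
    have hdxpos : (0:ℝ) < (deriv x u) ^ 2 := by positivity
    have : (0:ℝ) < num u := by
      simp only [hnum, hx0]
      nlinarith [mul_pos (mul_pos hlam hlam) hdxpos,
        mul_nonneg (mul_nonneg hlam.le hlam.le) (sq_nonneg (deriv z u))]
    linarith
  -- abbreviations
  set x' := deriv x u with hx'def
  set dz := deriv z u with hdzdef
  set dw := deriv w u with hdwdef
  have hF2pos : (0:ℝ) < lam ^ 2 - (x u) ^ 2 := by have := hx2 u; linarith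
  set F := Real.sqrt (lam ^ 2 - (x u) ^ 2) with hFdef
  have hFsq : F ^ 2 = lam ^ 2 - (x u) ^ 2 := Real.sq_sqrt hF2pos.le
  have hFpos : 0 < F := Real.sqrt_pos.mpr hF2pos
  have hFne : F ≠ 0 := hFpos.ne'
  -- derivative of F as function of t
  have hq : HasDerivAt (fun t => lam ^ 2 - (x t) ^ 2) (-(2 * x u * x')) u := by
    have := (hdx.hasDerivAt.pow 2).const_sub (lam ^ 2)
    simpa [mul_comm, mul_assoc, mul_left_comm] using this
  have hsqrt : HasDerivAt (fun t => Real.sqrt (lam ^ 2 - (x t) ^ 2)) (-(x u * x') / F) u := by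
    have := (Real.hasDerivAt_sqrt hF2pos.ne').comp u hq
    refine this.congr_deriv ?_
    rw [← hFdef]
    field_simp
  set ph := lam * dw / (lam ^ 2 - (x u) ^ 2) with hphdef
  have hphiadd : HasDerivAt (fun t => v + phi t) ph u := (hphi u).const_add v
  have hcosh : HasDerivAt (fun t => Real.cosh (v + phi t)) (Real.sinh (v + phi u) * ph) u := by
    have := (Real.hasDerivAt_cosh (v + phi u)).comp u hphiadd; exact this
  have hsinh : HasDerivAt (fun t => Real.sinh (v + phi t)) (Real.cosh (v + phi u) * ph) u := by
    have := (Real.hasDerivAt_sinh (v + phi u)).comp u hphiadd; exact this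
  have hR3 : HasDerivAt (fun t => Real.sqrt (lam ^ 2 - (x t) ^ 2) * Real.cosh (v + phi t))
      ((-(x u * x') / F) * Real.cosh (v + phi u) + F * (Real.sinh (v + phi u) * ph)) u :=
    hsqrt.mul hcosh
  have hR4 : HasDerivAt (fun t => Real.sqrt (lam ^ 2 - (x t) ^ 2) * Real.sinh (v + phi t))
      ((-(x u * x') / F) * Real.sinh (v + phi u) + F * (Real.cosh (v + phi u) * ph)) u :=
    hsqrt.mul hsinh
  -- pderivU X
  have eXu : pderivU X u v = (x' * Real.cos v, x' * Real.sin v, dz, dw) := by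
    simp only [pderivU, hX, Prod.mk.injEq]
    refine ⟨?_, ?_, ?_, ?_⟩
    · exact (hdx.hasDerivAt.mul_const _).deriv
    · exact (hdx.hasDerivAt.mul_const _).deriv
    · trivial
    · exact (hdw.hasDerivAt.add_const _).deriv
  -- pderivV X
  have eXv : pderivV X u v = (x u * (-Real.sin v), x u * Real.cos v, 0, lam) := by
    simp only [pderivV, hX, Prod.mk.injEq]
    refine ⟨?_, ?_, ?_, ?_⟩
    · exact ((Real.hasDerivAt_cos v).const_mul (x u)).deriv
    · exact ((Real.hasDerivAt_sin v).const_mul (x u)).deriv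
    · exact deriv_const v (z u)
    · have : HasDerivAt (fun s => w u + lam * s) lam v := by
        simpa using ((hasDerivAt_id v).const_mul lam).const_add (w u)
      exact this.deriv
  -- pderivU R
  have eRu : pderivU R u v =
      (-(a u * x u * x' / F), -(b u * x u * x' / F),
       (-(x u * x') / F) * Real.cosh (v + phi u) + F * (Real.sinh (v + phi u) * ph),
       (-(x u * x') / F) * Real.sinh (v + phi u) + F * (Real.cosh (v + phi u) * ph)) := by
    simp only [pderivU, hR, Prod.mk.injEq]
    refine ⟨?_, ?_, ?_, ?_⟩
    · exact (hn u).deriv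
    · exact (hp u).deriv
    · exact hR3.deriv
    · exact hR4.deriv
  -- pderivV R
  have eRv : pderivV R u v =
      (0, 0, F * Real.sinh (v + phi u), F * Real.cosh (v + phi u)) := by
    simp only [pderivV, hR, Prod.mk.injEq]
    refine ⟨?_, ?_, ?_, ?_⟩
    · exact deriv_const v (n u)
    · exact deriv_const v (p u)
    · have h : HasDerivAt (fun s => Real.cosh (s + phi u)) (Real.sinh (v + phi u)) v := by
        have := (Real.hasDerivAt_cosh (v + phi u)).comp v ((hasDerivAt_id v).add_const (phi u)); simp at this; exact this
      exact (h.const_mul F).deriv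
    · have h : HasDerivAt (fun s => Real.sinh (s + phi u)) (Real.cosh (v + phi u)) v := by
        have := (Real.hasDerivAt_sinh (v + phi u)).comp v ((hasDerivAt_id v).add_const (phi u)); simp at this; exact this
      exact (h.const_mul F).deriv
  rw [eXu, eXv, eRu, eRv]
  simp only [mdot]
  have hcs : Real.cos v ^ 2 + Real.sin v ^ 2 = 1 := by
    rw [add_comm]; exact Real.sin_sq_add_cos_sq v
  have hch : Real.cosh (v + phi u) ^ 2 - Real.sinh (v + phi u) ^ 2 = 1 :=
    Real.cosh_sq_sub_sinh_sq (v + phi u)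
  have hab' : (a u ^ 2 + b u ^ 2) * ((x u) ^ 2 * x' ^ 2) =
      (lam ^ 2 - (x u) ^ 2) * (x' ^ 2 + dz ^ 2) - (x u) ^ 2 * (x' ^ 2 - dw ^ 2) := by
    have hx'ne : x' ≠ 0 := hx' u
    rw [hab u, ← hx'def, ← hdzdef, ← hdwdef, div_mul_cancel₀]
    positivity
  rw [← hFsq] at hab' hphdef
  refine ⟨?_, ?_, ?_⟩
  · rw [hphdef]
    field_simp
    linear_combination (F ^ 2 * x' ^ 2) * hcs
      - (((x u) ^ 2 * x' ^ 2 - lam ^ 2 * dw ^ 2)) * hch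
      - hab' - dw ^ 2 * hFsq
  · rw [hphdef]
    field_simp
    linear_combination (F * lam * dw) * hch
  · linear_combination (x u) ^ 2 * hcs + F ^ 2 * hch + hFsq
end
end

section
/- Let X(u,v) = (x(u)+λv, y(u), w(u)sinh v, w(u)cosh v) with λ>0 and R(u,v) = (∫ a w w'/√(λ²+w²) du, ∫ b w w'/√(λ²+w²) du, √(λ²+w²) sinh(v+∫λx'/(λ²+w²)du), √(λ²+w²) cosh(v+∫λx'/(λ²+w²)du)), where a, b satisfy a²+b² = (w²(x'²+y'²) + λ²(y'²-w'²))/(w²w'²) with w, w' nonvanishing. Then X and R have the same induced metric from E⁴₁. -/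
noncomputable section

/-- Bour isometry of the type IIa helicoidal surface with a rotational surface
with hyperbolic profile. -/
theorem stmt8 (x y w a b phi n p : ℝ → ℝ) (lam : ℝ) (hlam : 0 < lam)
    (hx : ContDiff ℝ (⊤ : ℕ∞) x) (hy : ContDiff ℝ (⊤ : ℕ∞) y) (hw : ContDiff ℝ (⊤ : ℕ∞) w)
    (ha : ContDiff ℝ (⊤ : ℕ∞) a) (hb : ContDiff ℝ (⊤ : ℕ∞) b)
    (hw0 : ∀ u, w u ≠ 0) (hw' : ∀ u, deriv w u ≠ 0)
    (hphi : ∀ u, HasDerivAt phi (lam * deriv x u / (lam ^ 2 + (w u) ^ 2)) u)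
    (hn : ∀ u, HasDerivAt n (a u * w u * deriv w u / Real.sqrt (lam ^ 2 + (w u) ^ 2)) u)
    (hp : ∀ u, HasDerivAt p (b u * w u * deriv w u / Real.sqrt (lam ^ 2 + (w u) ^ 2)) u)
    (hab : ∀ u, (a u) ^ 2 + (b u) ^ 2 =
      ((w u) ^ 2 * ((deriv x u) ^ 2 + (deriv y u) ^ 2)
        + lam ^ 2 * ((deriv y u) ^ 2 - (deriv w u) ^ 2)) / ((w u) ^ 2 * (deriv w u) ^ 2))
    (X R : ℝ → ℝ → ℝ × ℝ × ℝ × ℝ)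
    (hX : ∀ u v, X u v = (x u + lam * v, y u, w u * Real.sinh v, w u * Real.cosh v))
    (hR : ∀ u v, R u v =
      (n u, p u,
       Real.sqrt (lam ^ 2 + (w u) ^ 2) * Real.sinh (v + phi u),
       Real.sqrt (lam ^ 2 + (w u) ^ 2) * Real.cosh (v + phi u))) :
    ∀ u v,
      mdot (pderivU X u v) (pderivU X u v) = mdot (pderivU R u v) (pderivU R u v) ∧
      mdot (pderivU X u v) (pderivV X u v) = mdot (pderivU R u v) (pderivV R u v) ∧
      mdot (pderivV X u v) (pderivV X u v) = mdot (pderivV R u v) (pderivV R u v) := by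
  intro u v
  have hxd : HasDerivAt x (deriv x u) u := (hx.differentiable (by simp) u).hasDerivAt
  have hwd : HasDerivAt w (deriv w u) u := (hw.differentiable (by simp) u).hasDerivAt
  have hyd : HasDerivAt y (deriv y u) u := (hy.differentiable (by simp) u).hasDerivAt
  have hfpos : 0 < lam ^ 2 + (w u) ^ 2 := by positivity
  set S := Real.sqrt (lam ^ 2 + (w u) ^ 2) with hSdef
  have hSne : S ≠ 0 := by positivity
  have hs2 : S ^ 2 = lam ^ 2 + (w u) ^ 2 := Real.sq_sqrt hfpos.le
  set q := lam * deriv x u / (lam ^ 2 + (w u) ^ 2) with hqdef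
  have hg : HasDerivAt (fun t => lam ^ 2 + w t ^ 2) (2 * w u * deriv w u) u := by
    have := (hwd.pow 2).const_add (lam ^ 2)
    simpa [mul_comm, mul_assoc] using this
  have hf : HasDerivAt (fun t => Real.sqrt (lam ^ 2 + w t ^ 2)) (w u * deriv w u / S) u := by
    have := hg.sqrt (ne_of_gt hfpos)
    convert this using 1
    rw [hSdef]
    field_simp
  have hth : HasDerivAt (fun t => v + phi t) q u := (hphi u).const_add v
  -- X partial derivatives
  have hXu : pderivU X u v =
      (deriv x u, deriv y u, deriv w u * Real.sinh v, deriv w u * Real.cosh v) := by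
    have e1 : (fun t => (X t v).1) = fun t => x t + lam * v := by funext t; rw [hX]
    have e2 : (fun t => (X t v).2.1) = fun t => y t := by funext t; rw [hX]
    have e3 : (fun t => (X t v).2.2.1) = fun t => w t * Real.sinh v := by funext t; rw [hX]
    have e4 : (fun t => (X t v).2.2.2) = fun t => w t * Real.cosh v := by funext t; rw [hX]
    unfold pderivU
    rw [e1, e2, e3, e4, (hxd.add_const (lam * v)).deriv, hyd.deriv,
      (hwd.mul_const (Real.sinh v)).deriv, (hwd.mul_const (Real.cosh v)).deriv]
  have hXv : pderivV X u v = (lam, 0, w u * Real.cosh v, w u * Real.sinh v) := by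
    have e1 : (fun s => (X u s).1) = fun s => x u + lam * s := by funext s; rw [hX]
    have e2 : (fun s => (X u s).2.1) = fun s : ℝ => y u := by funext s; rw [hX]
    have e3 : (fun s => (X u s).2.2.1) = fun s => w u * Real.sinh s := by funext s; rw [hX]
    have e4 : (fun s => (X u s).2.2.2) = fun s => w u * Real.cosh s := by funext s; rw [hX]
    have d1 : HasDerivAt (fun s : ℝ => x u + lam * s) lam v := by
      simpa using ((hasDerivAt_id v).const_mul lam).const_add (x u)
    have d3 : HasDerivAt (fun s : ℝ => w u * Real.sinh s) (w u * Real.cosh v) v :=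
      (Real.hasDerivAt_sinh v).const_mul (w u)
    have d4 : HasDerivAt (fun s : ℝ => w u * Real.cosh s) (w u * Real.sinh v) v :=
      (Real.hasDerivAt_cosh v).const_mul (w u)
    unfold pderivV
    rw [e1, e2, e3, e4, d1.deriv, d3.deriv, d4.deriv, deriv_const]
  -- R partial derivatives
  have hRu : pderivU R u v =
      (a u * w u * deriv w u / S,
       b u * w u * deriv w u / S,
       w u * deriv w u / S * Real.sinh (v + phi u)
         + S * (Real.cosh (v + phi u) * q),
       w u * deriv w u / S * Real.cosh (v + phi u)
         + S * (Real.sinh (v + phi u) * q)) := by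
    have e1 : (fun t => (R t v).1) = fun t => n t := by funext t; rw [hR]
    have e2 : (fun t => (R t v).2.1) = fun t => p t := by funext t; rw [hR]
    have e3 : (fun t => (R t v).2.2.1) =
        fun t => Real.sqrt (lam ^ 2 + w t ^ 2) * Real.sinh (v + phi t) := by
      funext t; rw [hR]
    have e4 : (fun t => (R t v).2.2.2) =
        fun t => Real.sqrt (lam ^ 2 + w t ^ 2) * Real.cosh (v + phi t) := by
      funext t; rw [hR]
    unfold pderivU
    rw [e1, e2, e3, e4, (hn u).deriv, (hp u).deriv, (show HasDerivAt (fun t => Real.sqrt (lam ^ 2 + w t ^ 2) * Real.sinh (v + phi t)) _ u from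
        hf.mul hth.sinh).deriv,
      (show HasDerivAt (fun t => Real.sqrt (lam ^ 2 + w t ^ 2) * Real.cosh (v + phi t)) _ u from
        hf.mul hth.cosh).deriv]
  have hRv : pderivV R u v =
      (0, 0, S * Real.cosh (v + phi u), S * Real.sinh (v + phi u)) := by
    have e1 : (fun s => (R u s).1) = fun s : ℝ => n u := by funext s; rw [hR]
    have e2 : (fun s => (R u s).2.1) = fun s : ℝ => p u := by funext s; rw [hR]
    have e3 : (fun s => (R u s).2.2.1) = fun s => S * Real.sinh (s + phi u) := by
      funext s; rw [hR]
    have e4 : (fun s => (R u s).2.2.2) = fun s => S * Real.cosh (s + phi u) := by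
      funext s; rw [hR]
    have h1 : HasDerivAt (fun s : ℝ => s + phi u) 1 v := (hasDerivAt_id v).add_const (phi u)
    have d3 : HasDerivAt (fun s : ℝ => S * Real.sinh (s + phi u)) (S * Real.cosh (v + phi u)) v := by
      simpa using h1.sinh.const_mul S
    have d4 : HasDerivAt (fun s : ℝ => S * Real.cosh (s + phi u)) (S * Real.sinh (v + phi u)) v := by
      simpa using h1.cosh.const_mul S
    unfold pderivV
    rw [e1, e2, e3, e4, d3.deriv, d4.deriv, deriv_const, deriv_const]
  rw [hXu, hXv, hRu, hRv]
  have hcs : Real.cosh (v + phi u) ^ 2 = Real.sinh (v + phi u) ^ 2 + 1 := by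
    linear_combination Real.cosh_sq_sub_sinh_sq (v + phi u)
  have hcv : Real.cosh v ^ 2 = Real.sinh v ^ 2 + 1 := by
    linear_combination Real.cosh_sq_sub_sinh_sq v
  have habu : (a u ^ 2 + b u ^ 2) * ((w u) ^ 2 * (deriv w u) ^ 2) =
      (w u) ^ 2 * ((deriv x u) ^ 2 + (deriv y u) ^ 2)
        + lam ^ 2 * ((deriv y u) ^ 2 - (deriv w u) ^ 2) := by
    rw [hab u]
    field_simp [hw0 u, hw' u]
  refine ⟨?_, ?_, ?_⟩
  · have L : mdot (deriv x u, deriv y u, deriv w u * Real.sinh v, deriv w u * Real.cosh v)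
        (deriv x u, deriv y u, deriv w u * Real.sinh v, deriv w u * Real.cosh v)
        = (deriv x u) ^ 2 + (deriv y u) ^ 2 - (deriv w u) ^ 2 := by
      unfold mdot; linear_combination (-(deriv w u) ^ 2) * hcv
    have Rr : mdot (a u * w u * deriv w u / S, b u * w u * deriv w u / S,
        w u * deriv w u / S * Real.sinh (v + phi u) + S * (Real.cosh (v + phi u) * q),
        w u * deriv w u / S * Real.cosh (v + phi u) + S * (Real.sinh (v + phi u) * q))
        (a u * w u * deriv w u / S, b u * w u * deriv w u / S,
        w u * deriv w u / S * Real.sinh (v + phi u) + S * (Real.cosh (v + phi u) * q),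
        w u * deriv w u / S * Real.cosh (v + phi u) + S * (Real.sinh (v + phi u) * q))
        = (a u ^ 2 + b u ^ 2) * (w u * deriv w u) ^ 2 / S ^ 2
          - (w u * deriv w u) ^ 2 / S ^ 2 + S ^ 2 * q ^ 2 := by
      unfold mdot
      linear_combination (S ^ 2 * q ^ 2 - (w u * deriv w u / S) ^ 2) * hcs
    rw [L, Rr, hs2, hqdef]
    field_simp
    linear_combination (-1) * habu
  · have L : mdot (deriv x u, deriv y u, deriv w u * Real.sinh v, deriv w u * Real.cosh v)
        (lam, 0, w u * Real.cosh v, w u * Real.sinh v) = lam * deriv x u := by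
      unfold mdot; ring
    have Rr : mdot (a u * w u * deriv w u / S, b u * w u * deriv w u / S,
        w u * deriv w u / S * Real.sinh (v + phi u) + S * (Real.cosh (v + phi u) * q),
        w u * deriv w u / S * Real.cosh (v + phi u) + S * (Real.sinh (v + phi u) * q))
        (0, 0, S * Real.cosh (v + phi u), S * Real.sinh (v + phi u)) = S ^ 2 * q := by
      unfold mdot
      linear_combination (S ^ 2 * q) * hcs
    rw [L, Rr, hs2, hqdef]
    field_simp
  · have L : mdot (lam, 0, w u * Real.cosh v, w u * Real.sinh v)
        (lam, 0, w u * Real.cosh v, w u * Real.sinh v) = lam ^ 2 + (w u) ^ 2 := by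
      unfold mdot; linear_combination (w u) ^ 2 * hcv
    have Rr : mdot (0, 0, S * Real.cosh (v + phi u), S * Real.sinh (v + phi u))
        (0, 0, S * Real.cosh (v + phi u), S * Real.sinh (v + phi u)) = S ^ 2 := by
      unfold mdot
      linear_combination S ^ 2 * hcs
    rw [L, Rr, hs2]
end
end

section
/- Let x, w be smooth functions with w, w' nonvanishing and λ > 0. Suppose -x'(u)w(u)/(λw'(u)) = coth(∫ λx'(u)/(λ²+w²(u)) du) holds on an interval. Then differentiating this relation yields λ(x'w'²(2λ²+w²) - w²x'³ + w(λ²+w²)(x''w' - x'w'')) = 0. -/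
/-- differentiating -x'w/(λw') = coth(∫ λx'/(λ²+w²) du) yields the stated
second-order identity. -/
theorem stmt10 (x w F : ℝ → ℝ) (lam : ℝ) (hlam : 0 < lam)
    (hx : ContDiff ℝ (⊤ : ℕ∞) x) (hw : ContDiff ℝ (⊤ : ℕ∞) w)
    (hw0 : ∀ u, w u ≠ 0) (hw' : ∀ u, deriv w u ≠ 0)
    (hF : ∀ u, HasDerivAt F (lam * deriv x u / (lam ^ 2 + (w u) ^ 2)) u)
    (hsinh : ∀ u, Real.sinh (F u) ≠ 0)
    (hrel : ∀ u, -(deriv x u * w u) / (lam * deriv w u)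
      = Real.cosh (F u) / Real.sinh (F u)) :
    ∀ u, lam * (deriv x u * (deriv w u) ^ 2 * (2 * lam ^ 2 + (w u) ^ 2)
          - (w u) ^ 2 * (deriv x u) ^ 3
          + w u * (lam ^ 2 + (w u) ^ 2)
              * (deriv (deriv x) u * deriv w u - deriv x u * deriv (deriv w) u)) = 0 := by
  have hxI : ContDiff ℝ ((⊤ : ℕ∞) : WithTop ℕ∞) x := hx.of_le (by simp)
  have hwI : ContDiff ℝ ((⊤ : ℕ∞) : WithTop ℕ∞) w := hw.of_le (by simp)
  have hx' : ContDiff ℝ ((⊤ : ℕ∞) : WithTop ℕ∞) (deriv x) := (contDiff_infty_iff_deriv.mp hxI).2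
  have hwc : ContDiff ℝ ((⊤ : ℕ∞) : WithTop ℕ∞) (deriv w) := (contDiff_infty_iff_deriv.mp hwI).2
  intro u
  have hlam0 : lam ≠ 0 := ne_of_gt hlam
  have hden0 : lam * deriv w u ≠ 0 := mul_ne_zero hlam0 (hw' u)
  have hsq : lam ^ 2 + (w u) ^ 2 ≠ 0 := by positivity
  have hs0 : Real.sinh (F u) ≠ 0 := hsinh u
  have hle : ((⊤ : ℕ∞) : WithTop ℕ∞) ≠ 0 := by simp
  have hxd : HasDerivAt x (deriv x u) u := (hxI.differentiable hle u).hasDerivAt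
  have hwd : HasDerivAt w (deriv w u) u := (hwI.differentiable hle u).hasDerivAt
  have hxd2 : HasDerivAt (deriv x) (deriv (deriv x) u) u :=
    (hx'.differentiable hle u).hasDerivAt
  have hwd2 : HasDerivAt (deriv w) (deriv (deriv w) u) u :=
    (hwc.differentiable hle u).hasDerivAt
  have hnum : HasDerivAt (fun v => -(deriv x v * w v))
      (-(deriv (deriv x) u * w u + deriv x u * deriv w u)) u := (hxd2.mul hwd).neg
  have hden : HasDerivAt (fun v => lam * deriv w v) (lam * deriv (deriv w) u) u :=
    hwd2.const_mul lam
  have hg : HasDerivAt (fun v => -(deriv x v * w v) / (lam * deriv w v))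
      ((-(deriv (deriv x) u * w u + deriv x u * deriv w u) * (lam * deriv w u)
        - -(deriv x u * w u) * (lam * deriv (deriv w) u)) / (lam * deriv w u) ^ 2) u :=
    hnum.div hden hden0
  have hc : HasDerivAt (fun v => Real.cosh (F v))
      (Real.sinh (F u) * (lam * deriv x u / (lam ^ 2 + (w u) ^ 2))) u := (hF u).cosh
  have hs : HasDerivAt (fun v => Real.sinh (F v))
      (Real.cosh (F u) * (lam * deriv x u / (lam ^ 2 + (w u) ^ 2))) u := (hF u).sinh
  have hr : HasDerivAt (fun v => Real.cosh (F v) / Real.sinh (F v))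
      ((Real.sinh (F u) * (lam * deriv x u / (lam ^ 2 + (w u) ^ 2)) * Real.sinh (F u)
        - Real.cosh (F u) * (Real.cosh (F u) * (lam * deriv x u / (lam ^ 2 + (w u) ^ 2))))
        / Real.sinh (F u) ^ 2) u := hc.div hs hs0
  have heq : (fun v => -(deriv x v * w v) / (lam * deriv w v))
      = fun v => Real.cosh (F v) / Real.sinh (F v) := funext hrel
  have hkey := (heq ▸ hg).unique hr
  set X' := deriv x u
  set X'' := deriv (deriv x) u
  set W := w u
  set W' := deriv w u
  set W'' := deriv (deriv w) u
  set s := Real.sinh (F u)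
  set c := Real.cosh (F u)
  have hpy : c ^ 2 - s ^ 2 = 1 := Real.cosh_sq_sub_sinh_sq (F u)
  have hcs : -(X' * W) * s = c * (lam * W') := (div_eq_div_iff hden0 hs0).mp (hrel u)
  have h2 : (-(X' * W) * s) ^ 2 = (c * (lam * W')) ^ 2 := by rw [hcs]
  have hs2 : s ^ 2 * (X' ^ 2 * W ^ 2 - lam ^ 2 * W' ^ 2) = lam ^ 2 * W' ^ 2 := by
    linear_combination h2 + lam ^ 2 * W' ^ 2 * hpy
  have E1 : (-(X'' * W + X' * W') * (lam * W') - -(X' * W) * (lam * W'')) * s ^ 2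
        * (lam ^ 2 + W ^ 2)
      = (s ^ 2 - c ^ 2) * (lam * X') * (lam * W') ^ 2 := by
    field_simp at hkey
    rw [div_eq_iff (pow_ne_zero 2 (hw' u))] at hkey
    linear_combination lam * hkey
  have hfin : ((-(X'' * W + X' * W') * (lam * W') - -(X' * W) * (lam * W''))
        * (lam ^ 2 + W ^ 2) + lam * X' * (X' ^ 2 * W ^ 2 - lam ^ 2 * W' ^ 2))
        * (lam ^ 2 * W' ^ 2) = 0 := by
    linear_combination (X' ^ 2 * W ^ 2 - lam ^ 2 * W' ^ 2) * E1
      - (-(X'' * W + X' * W') * (lam * W') - -(X' * W) * (lam * W''))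
          * (lam ^ 2 + W ^ 2) * hs2
      - lam * X' * lam ^ 2 * W' ^ 2 * (X' ^ 2 * W ^ 2 - lam ^ 2 * W' ^ 2) * hpy
  have hne : lam ^ 2 * W' ^ 2 ≠ 0 :=
    mul_ne_zero (pow_ne_zero 2 hlam0) (pow_ne_zero 2 (hw' u))
  have hfin2 := (mul_eq_zero.mp hfin).resolve_right hne
  linear_combination -hfin2
end

section
/- Let X(u,v) = (x(u)+λv, y(u), z(u)cosh v, z(u)sinh v) with λ>0 and z(u)² > λ², and let R(u,v) have components (∫ a z z'/√(z²-λ²) du, ∫ b z z'/√(z²-λ²) du, √(z²-λ²)cosh(v-∫λx'/(z²-λ²)du), √(z²-λ²)sinh(v-∫λx'/(z²-λ²)du)), where a²+b² = (z²(x'²+y'²) - λ²(y'²+z'²))/(z²z'²) and z' ≠ 0. Then X and R have the same induced metric from E⁴₁. -/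
noncomputable section

/-- Bour isometry of the type IIb helicoidal surface (z² > λ²) with a
rotational surface with timelike hyperbolic profile. -/
theorem stmt12 (x y z a b phi n p : ℝ → ℝ) (lam : ℝ) (hlam : 0 < lam)
    (hx : ContDiff ℝ (⊤ : ℕ∞) x) (hy : ContDiff ℝ (⊤ : ℕ∞) y) (hz : ContDiff ℝ (⊤ : ℕ∞) z)
    (ha : ContDiff ℝ (⊤ : ℕ∞) a) (hb : ContDiff ℝ (⊤ : ℕ∞) b)
    (hz2 : ∀ u, (z u) ^ 2 > lam ^ 2) (hz' : ∀ u, deriv z u ≠ 0)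
    (hphi : ∀ u, HasDerivAt phi (lam * deriv x u / ((z u) ^ 2 - lam ^ 2)) u)
    (hn : ∀ u, HasDerivAt n (a u * z u * deriv z u / Real.sqrt ((z u) ^ 2 - lam ^ 2)) u)
    (hp : ∀ u, HasDerivAt p (b u * z u * deriv z u / Real.sqrt ((z u) ^ 2 - lam ^ 2)) u)
    (hab : ∀ u, (a u) ^ 2 + (b u) ^ 2 =
      ((z u) ^ 2 * ((deriv x u) ^ 2 + (deriv y u) ^ 2)
        - lam ^ 2 * ((deriv y u) ^ 2 + (deriv z u) ^ 2)) / ((z u) ^ 2 * (deriv z u) ^ 2))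
    (X R : ℝ → ℝ → ℝ × ℝ × ℝ × ℝ)
    (hX : ∀ u v, X u v = (x u + lam * v, y u, z u * Real.cosh v, z u * Real.sinh v))
    (hR : ∀ u v, R u v =
      (n u, p u,
       Real.sqrt ((z u) ^ 2 - lam ^ 2) * Real.cosh (v - phi u),
       Real.sqrt ((z u) ^ 2 - lam ^ 2) * Real.sinh (v - phi u))) :
    ∀ u v,
      mdot (pderivU X u v) (pderivU X u v) = mdot (pderivU R u v) (pderivU R u v) ∧
      mdot (pderivU X u v) (pderivV X u v) = mdot (pderivU R u v) (pderivV R u v) ∧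
      mdot (pderivV X u v) (pderivV X u v) = mdot (pderivV R u v) (pderivV R u v) := by
  intro u v
  have hw2 : (0:ℝ) < (z u) ^ 2 - lam ^ 2 := by have := hz2 u; linarith
  set w : ℝ := Real.sqrt ((z u) ^ 2 - lam ^ 2) with hwdef
  have hwpos : 0 < w := Real.sqrt_pos.mpr hw2
  have hwsq : w ^ 2 = (z u) ^ 2 - lam ^ 2 := Real.sq_sqrt hw2.le
  have hwne : w ≠ 0 := hwpos.ne'
  have hdx : HasDerivAt x (deriv x u) u := (hx.differentiable (by simp) u).hasDerivAt
  have hdz : HasDerivAt z (deriv z u) u := (hz.differentiable (by simp) u).hasDerivAt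
  -- derivatives of X
  have hXu : pderivU X u v =
      (deriv x u, deriv y u, deriv z u * Real.cosh v, deriv z u * Real.sinh v) := by
    have e1 : (fun t => (X t v).1) = fun t => x t + lam * v := by funext t; rw [hX]
    have e2 : (fun t => (X t v).2.1) = y := by funext t; rw [hX]
    have e3 : (fun t => (X t v).2.2.1) = fun t => z t * Real.cosh v := by funext t; rw [hX]
    have e4 : (fun t => (X t v).2.2.2) = fun t => z t * Real.sinh v := by funext t; rw [hX]
    have d1 : deriv (fun t => x t + lam * v) u = deriv x u := (hdx.add_const _).deriv
    have d3 : deriv (fun t => z t * Real.cosh v) u = deriv z u * Real.cosh v :=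
      (hdz.mul_const _).deriv
    have d4 : deriv (fun t => z t * Real.sinh v) u = deriv z u * Real.sinh v :=
      (hdz.mul_const _).deriv
    simp only [pderivU, e1, e2, e3, e4, d1, d3, d4]
  have hXv : pderivV X u v = (lam, 0, z u * Real.sinh v, z u * Real.cosh v) := by
    have e1 : (fun s => (X u s).1) = fun s => x u + lam * s := by funext s; rw [hX]
    have e2 : (fun s => (X u s).2.1) = fun _ => y u := by funext s; rw [hX]
    have e3 : (fun s => (X u s).2.2.1) = fun s => z u * Real.cosh s := by funext s; rw [hX]
    have e4 : (fun s => (X u s).2.2.2) = fun s => z u * Real.sinh s := by funext s; rw [hX]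
    have d1 : deriv (fun s => x u + lam * s) v = lam := by
      have : HasDerivAt (fun s : ℝ => x u + lam * s) lam v := by
        simpa using ((hasDerivAt_id v).const_mul lam).const_add (x u)
      exact this.deriv
    have d3 : deriv (fun s => z u * Real.cosh s) v = z u * Real.sinh v :=
      ((Real.hasDerivAt_cosh v).const_mul (z u)).deriv
    have d4 : deriv (fun s => z u * Real.sinh s) v = z u * Real.cosh v :=
      ((Real.hasDerivAt_sinh v).const_mul (z u)).deriv
    simp only [pderivV, e1, e2, e3, e4, d1, d3, d4, deriv_const]
  -- derivatives of R
  have hdw : HasDerivAt (fun t => Real.sqrt ((z t) ^ 2 - lam ^ 2))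
      (z u * deriv z u / w) u := by
    have h1 : HasDerivAt (fun t => (z t) ^ 2 - lam ^ 2) (2 * z u * deriv z u) u := by
      have := (hdz.pow 2).sub_const (lam ^ 2)
      simpa [mul_comm, mul_assoc, mul_left_comm] using this
    have h2 := (Real.hasDerivAt_sqrt hw2.ne').comp u h1
    refine h2.congr_deriv ?_
    rw [← hwdef]
    field_simp
  have hdpsi : HasDerivAt (fun t => v - phi t)
      (-(lam * deriv x u / ((z u) ^ 2 - lam ^ 2))) u := (hphi u).const_sub v
  have hdC : HasDerivAt (fun t => Real.cosh (v - phi t))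
      (Real.sinh (v - phi u) * -(lam * deriv x u / ((z u) ^ 2 - lam ^ 2))) u :=
    by have := (Real.hasDerivAt_cosh (v - phi u)).comp u hdpsi; exact this
  have hdS : HasDerivAt (fun t => Real.sinh (v - phi t))
      (Real.cosh (v - phi u) * -(lam * deriv x u / ((z u) ^ 2 - lam ^ 2))) u :=
    by have := (Real.hasDerivAt_sinh (v - phi u)).comp u hdpsi; exact this
  have hRu : pderivU R u v =
      (a u * z u * deriv z u / w, b u * z u * deriv z u / w,
       z u * deriv z u / w * Real.cosh (v - phi u)
         - lam * deriv x u / w * Real.sinh (v - phi u),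
       z u * deriv z u / w * Real.sinh (v - phi u)
         - lam * deriv x u / w * Real.cosh (v - phi u)) := by
    have e1 : (fun t => (R t v).1) = n := by funext t; rw [hR]
    have e2 : (fun t => (R t v).2.1) = p := by funext t; rw [hR]
    have e3 : (fun t => (R t v).2.2.1) =
        fun t => Real.sqrt ((z t) ^ 2 - lam ^ 2) * Real.cosh (v - phi t) := by
      funext t; rw [hR]
    have e4 : (fun t => (R t v).2.2.2) =
        fun t => Real.sqrt ((z t) ^ 2 - lam ^ 2) * Real.sinh (v - phi t) := by
      funext t; rw [hR]
    have d3 : deriv (fun t => Real.sqrt ((z t) ^ 2 - lam ^ 2) * Real.cosh (v - phi t)) u =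
        z u * deriv z u / w * Real.cosh (v - phi u)
          - lam * deriv x u / w * Real.sinh (v - phi u) := by
      rw [(hdw.fun_mul hdC).deriv, ← hwsq]
      field_simp
      rw [Real.sqrt_sq hwpos.le]
      ring
    have d4 : deriv (fun t => Real.sqrt ((z t) ^ 2 - lam ^ 2) * Real.sinh (v - phi t)) u =
        z u * deriv z u / w * Real.sinh (v - phi u)
          - lam * deriv x u / w * Real.cosh (v - phi u) := by
      rw [(hdw.fun_mul hdS).deriv, ← hwsq]
      field_simp
      rw [Real.sqrt_sq hwpos.le]
      ring
    simp only [pderivU, e1, e2, e3, e4, d3, d4, (hn u).deriv, (hp u).deriv, ← hwdef]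
  have hRv : pderivV R u v =
      (0, 0, w * Real.sinh (v - phi u), w * Real.cosh (v - phi u)) := by
    have e1 : (fun s => (R u s).1) = fun _ => n u := by funext s; rw [hR]
    have e2 : (fun s => (R u s).2.1) = fun _ => p u := by funext s; rw [hR]
    have e3 : (fun s => (R u s).2.2.1) = fun s => w * Real.cosh (s - phi u) := by
      funext s; rw [hR]
    have e4 : (fun s => (R u s).2.2.2) = fun s => w * Real.sinh (s - phi u) := by
      funext s; rw [hR]
    have hid : HasDerivAt (fun s : ℝ => s - phi u) 1 v := by
      simpa using (hasDerivAt_id v).sub_const (phi u)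
    have d3 : deriv (fun s => w * Real.cosh (s - phi u)) v = w * Real.sinh (v - phi u) := by
      have := (((Real.hasDerivAt_cosh (v - phi u)).comp v hid).const_mul w).deriv
      simpa using this
    have d4 : deriv (fun s => w * Real.sinh (s - phi u)) v = w * Real.cosh (v - phi u) := by
      have := (((Real.hasDerivAt_sinh (v - phi u)).comp v hid).const_mul w).deriv
      simpa using this
    simp only [pderivV, e1, e2, e3, e4, d3, d4, deriv_const]
  -- algebra
  have hzne : z u ≠ 0 := by
    intro h; have := hz2 u; rw [h] at this; nlinarith [sq_nonneg lam, hlam]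
  have hzz' : (z u) ^ 2 * (deriv z u) ^ 2 ≠ 0 :=
    mul_ne_zero (pow_ne_zero _ hzne) (pow_ne_zero _ (hz' u))
  have hab' : ((a u) ^ 2 + (b u) ^ 2) * ((z u) ^ 2 * (deriv z u) ^ 2) =
      (z u) ^ 2 * ((deriv x u) ^ 2 + (deriv y u) ^ 2)
        - lam ^ 2 * ((deriv y u) ^ 2 + (deriv z u) ^ 2) := by
    rw [hab u, div_mul_cancel₀ _ hzz']
  have hc1 : Real.cosh v ^ 2 - Real.sinh v ^ 2 = 1 := Real.cosh_sq_sub_sinh_sq v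
  have hc2 : Real.cosh (v - phi u) ^ 2 - Real.sinh (v - phi u) ^ 2 = 1 :=
    Real.cosh_sq_sub_sinh_sq (v - phi u)
  rw [hXu, hXv, hRu, hRv]
  simp only [mdot]
  refine ⟨?_, ?_, ?_⟩
  · field_simp
    linear_combination (w ^ 2 * (deriv z u) ^ 2) * hc1
      + (-((z u) ^ 2 * (deriv z u) ^ 2 - lam ^ 2 * (deriv x u) ^ 2)) * hc2
      + ((deriv x u) ^ 2 + (deriv y u) ^ 2 + (deriv z u) ^ 2) * hwsq
      + (-1 : ℝ) * hab'
  · field_simp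
    linear_combination (-(lam * deriv x u * w)) * hc2
  · linear_combination (-(z u) ^ 2) * hc1 + w ^ 2 * hc2 + hwsq
end
end

section
/- Let x, z be smooth functions with z, z' nonvanishing and λ > 0. Suppose x'(u)z(u)/(λz'(u)) = coth(∫ λx'(u)/(z²(u)-λ²) du) on an interval. Then differentiating this relation yields x'z'²(z²-2λ²) + z²x'³ + z(λ²-z²)(x'z'' - x''z') = 0. -/
/-- differentiating x'z/(λz') = coth(∫ λx'/(z²-λ²) du) yields the stated
second-order identity. -/
theorem stmt14 (x z F : ℝ → ℝ) (lam : ℝ) (hlam : 0 < lam)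
    (hx : ContDiff ℝ (⊤ : ℕ∞) x) (hz : ContDiff ℝ (⊤ : ℕ∞) z)
    (hz0 : ∀ u, z u ≠ 0) (hz' : ∀ u, deriv z u ≠ 0)
    (hzl : ∀ u, (z u) ^ 2 - lam ^ 2 ≠ 0)
    (hF : ∀ u, HasDerivAt F (lam * deriv x u / ((z u) ^ 2 - lam ^ 2)) u)
    (hsinh : ∀ u, Real.sinh (F u) ≠ 0)
    (hrel : ∀ u, deriv x u * z u / (lam * deriv z u)
      = Real.cosh (F u) / Real.sinh (F u)) :
    ∀ u, deriv x u * (deriv z u) ^ 2 * ((z u) ^ 2 - 2 * lam ^ 2)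
        + (z u) ^ 2 * (deriv x u) ^ 3
        + z u * (lam ^ 2 - (z u) ^ 2)
            * (deriv x u * deriv (deriv z) u - deriv (deriv x) u * deriv z u) = 0 := by
  intro u
  have hxd : Differentiable ℝ x := (contDiff_infty_iff_deriv.mp (hx.of_le (by simp))).1
  have hx' : ContDiff ℝ (⊤ : ℕ∞) (deriv x) := (contDiff_infty_iff_deriv.mp (hx.of_le (by simp))).2
  have hzd : Differentiable ℝ z := (contDiff_infty_iff_deriv.mp (hz.of_le (by simp))).1
  have hz'' : ContDiff ℝ (⊤ : ℕ∞) (deriv z) := (contDiff_infty_iff_deriv.mp (hz.of_le (by simp))).2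
  have hax : HasDerivAt (deriv x) (deriv (deriv x) u) u :=
    ((hx'.differentiable (by simp)) u).hasDerivAt
  have haz : HasDerivAt (deriv z) (deriv (deriv z) u) u :=
    ((hz''.differentiable (by simp)) u).hasDerivAt
  have hxu : HasDerivAt x (deriv x u) u := (hxd u).hasDerivAt
  have hzu : HasDerivAt z (deriv z u) u := (hzd u).hasDerivAt
  have hs := hsinh u
  have hl := hzl u
  have hln : lam ≠ 0 := ne_of_gt hlam
  have hzn := hz0 u
  have hz'n := hz' u
  have hden : lam * deriv z u ≠ 0 := mul_ne_zero hln hz'n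
  -- LHS derivative
  have hL := (hax.mul hzu).div ((hasDerivAt_const u lam).mul haz) hden
  -- RHS derivative
  have hR : HasDerivAt (fun u => Real.cosh (F u) / Real.sinh (F u))
      ((Real.sinh (F u) * (lam * deriv x u / ((z u) ^ 2 - lam ^ 2)) * Real.sinh (F u)
        - Real.cosh (F u) * (Real.cosh (F u) * (lam * deriv x u / ((z u) ^ 2 - lam ^ 2))))
        / (Real.sinh (F u)) ^ 2) u :=
    ((hF u).cosh.div (hF u).sinh (hsinh u))
  have hfun : (fun u => deriv x u * z u / (lam * deriv z u))
      = fun u => Real.cosh (F u) / Real.sinh (F u) := funext hrel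
  change HasDerivAt (fun u => deriv x u * z u / (lam * deriv z u)) _ u at hL
  simp only [Pi.mul_apply] at hL
  rw [hfun] at hL
  have heq := hL.unique hR
  have hc : Real.cosh (F u) = deriv x u * z u * Real.sinh (F u) / (lam * deriv z u) := by
    have h0 := hrel u
    field_simp at h0 ⊢
    linear_combination -h0
  rw [hc] at heq
  field_simp at heq
  have hC : lam ^ 3 * (deriv z u) ^ 2 * ((z u) ^ 2 - lam ^ 2) * (Real.sinh (F u)) ^ 2 ≠ 0 :=
    mul_ne_zero (mul_ne_zero (mul_ne_zero (pow_ne_zero _ hln) (pow_ne_zero _ hz'n)) hl)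
      (pow_ne_zero _ hs)
  have key : ((z u) ^ 2 - lam ^ 2) * (deriv (deriv x) u * z u * deriv z u
        + deriv x u * (deriv z u) ^ 2 - deriv x u * z u * deriv (deriv z) u)
      = lam ^ 2 * deriv x u * (deriv z u) ^ 2 - (deriv x u) ^ 3 * (z u) ^ 2 :=
    mul_left_cancel₀ hC (by linear_combination (lam ^ 2 * (deriv z u) ^ 2 * ((z u) ^ 2 - lam ^ 2) * (Real.sinh (F u)) ^ 2) * heq)
  linear_combination key
end

section
/- With ξ₃ = (1/√2)(e₄-e₃), ξ₄ = (1/√2)(e₃+e₄), let X₃(u,v) = x(u)e₁ + √2vw(u)e₂ + (z(u)+v²w(u)+λv)ξ₃ + w(u)ξ₄ and R₃(u,v) = (∫a w' du)e₁ + √2 w (v + λ/(2w)) e₂ + (∫b w' du + w(v+λ/(2w))²)ξ₃ + w ξ₄, where λ>0, w, w' nonvanishing, and a, b satisfy a² - 2b = (x'²-2w'z')/w'² - λ²/(2w²). Then X₃ and R₃ have the same induced metric from E⁴₁. -/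
noncomputable section

set_option maxHeartbeats 1000000

/-- Bour isometry of the type III (parabolic) helicoidal surface with a
rotational surface of parabolic type, in standard coordinates
(ξ₃ = (0,0,-1/√2,1/√2), ξ₄ = (0,0,1/√2,1/√2)). -/
theorem stmt16 (x z w a b nf sf : ℝ → ℝ) (lam : ℝ) (hlam : 0 < lam)
    (hx : ContDiff ℝ (⊤ : ℕ∞) x) (hz : ContDiff ℝ (⊤ : ℕ∞) z) (hw : ContDiff ℝ (⊤ : ℕ∞) w)
    (ha : ContDiff ℝ (⊤ : ℕ∞) a) (hb : ContDiff ℝ (⊤ : ℕ∞) b)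
    (hw0 : ∀ u, w u ≠ 0) (hw' : ∀ u, deriv w u ≠ 0)
    (hn : ∀ u, HasDerivAt nf (a u * deriv w u) u)
    (hs : ∀ u, HasDerivAt sf (b u * deriv w u) u)
    (hab : ∀ u, (a u) ^ 2 - 2 * b u =
      ((deriv x u) ^ 2 - 2 * deriv w u * deriv z u) / (deriv w u) ^ 2
        - lam ^ 2 / (2 * (w u) ^ 2))
    (X R : ℝ → ℝ → ℝ × ℝ × ℝ × ℝ)
    (hX : ∀ u v, X u v =
      (x u, Real.sqrt 2 * v * w u,
       (z u + v ^ 2 * w u + lam * v) * (-(1 / Real.sqrt 2)) + w u * (1 / Real.sqrt 2),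
       (z u + v ^ 2 * w u + lam * v) * (1 / Real.sqrt 2) + w u * (1 / Real.sqrt 2)))
    (hR : ∀ u v, R u v =
      (nf u, Real.sqrt 2 * w u * (v + lam / (2 * w u)),
       (sf u + w u * (v + lam / (2 * w u)) ^ 2) * (-(1 / Real.sqrt 2))
         + w u * (1 / Real.sqrt 2),
       (sf u + w u * (v + lam / (2 * w u)) ^ 2) * (1 / Real.sqrt 2)
         + w u * (1 / Real.sqrt 2))) :
    ∀ u v,
      mdot (pderivU X u v) (pderivU X u v) = mdot (pderivU R u v) (pderivU R u v) ∧
      mdot (pderivU X u v) (pderivV X u v) = mdot (pderivU R u v) (pderivV R u v) ∧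
      mdot (pderivV X u v) (pderivV X u v) = mdot (pderivV R u v) (pderivV R u v) := by
  intro u v
  have h2 : Real.sqrt 2 ≠ 0 := by positivity
  have h2sq : Real.sqrt 2 * Real.sqrt 2 = 2 := Real.mul_self_sqrt (by norm_num)
  have dx := ((hx.differentiable (by simp)) u).hasDerivAt
  have dz := ((hz.differentiable (by simp)) u).hasDerivAt
  have dw := ((hw.differentiable (by simp)) u).hasDerivAt
  have dn := hn u
  have ds := hs u
  have eXU2 : deriv (fun t => Real.sqrt 2 * v * w t) u = Real.sqrt 2 * v * deriv w u :=
    (dw.const_mul _).deriv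
  have eXU3 : deriv (fun t => (z t + v ^ 2 * w t + lam * v) * (-(1 / Real.sqrt 2)) + w t * (1 / Real.sqrt 2)) u
      = (deriv z u + v ^ 2 * deriv w u) * (-(1 / Real.sqrt 2)) + deriv w u * (1 / Real.sqrt 2) :=
    ((((dz.add (dw.const_mul _)).add_const _).mul_const _).add (dw.mul_const _)).deriv
  have eXU4 : deriv (fun t => (z t + v ^ 2 * w t + lam * v) * (1 / Real.sqrt 2) + w t * (1 / Real.sqrt 2)) u
      = (deriv z u + v ^ 2 * deriv w u) * (1 / Real.sqrt 2) + deriv w u * (1 / Real.sqrt 2) :=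
    ((((dz.add (dw.const_mul _)).add_const _).mul_const _).add (dw.mul_const _)).deriv
  have eXV1 : deriv (fun _ : ℝ => x u) v = 0 := deriv_const _ _
  have eXV2 : deriv (fun s => Real.sqrt 2 * s * w u) v = Real.sqrt 2 * w u := by
    have h : HasDerivAt (fun s : ℝ => Real.sqrt 2 * s * w u) (Real.sqrt 2 * 1 * w u) v :=
      ((hasDerivAt_id v).const_mul _).mul_const _
    rw [h.deriv]; ring
  have eXV3 : deriv (fun s => (z u + s ^ 2 * w u + lam * s) * (-(1 / Real.sqrt 2)) + w u * (1 / Real.sqrt 2)) v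
      = (2 * v * w u + lam) * (-(1 / Real.sqrt 2)) := by
    have h : HasDerivAt (fun s : ℝ => (z u + s ^ 2 * w u + lam * s) * (-(1 / Real.sqrt 2)) + w u * (1 / Real.sqrt 2))
        (((((2:ℕ) : ℝ) * v ^ 1 * w u) + lam * 1) * (-(1 / Real.sqrt 2))) v :=
      (((((hasDerivAt_pow 2 v).mul_const (w u)).const_add (z u)).add ((hasDerivAt_id v).const_mul lam)).mul_const _).add_const _
    rw [h.deriv]; push_cast; ring
  have eXV4 : deriv (fun s => (z u + s ^ 2 * w u + lam * s) * (1 / Real.sqrt 2) + w u * (1 / Real.sqrt 2)) v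
      = (2 * v * w u + lam) * (1 / Real.sqrt 2) := by
    have h : HasDerivAt (fun s : ℝ => (z u + s ^ 2 * w u + lam * s) * (1 / Real.sqrt 2) + w u * (1 / Real.sqrt 2))
        (((((2:ℕ) : ℝ) * v ^ 1 * w u) + lam * 1) * (1 / Real.sqrt 2)) v :=
      (((((hasDerivAt_pow 2 v).mul_const (w u)).const_add (z u)).add ((hasDerivAt_id v).const_mul lam)).mul_const _).add_const _
    rw [h.deriv]; push_cast; ring
  -- R side
  have hfR2 : (fun t => Real.sqrt 2 * w t * (v + lam / (2 * w t)))
      = (fun t => Real.sqrt 2 * v * w t + Real.sqrt 2 * lam / 2) := by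
    funext t; have := hw0 t; field_simp
  have hfR3 : (fun t => (sf t + w t * (v + lam / (2 * w t)) ^ 2) * (-(1 / Real.sqrt 2)) + w t * (1 / Real.sqrt 2))
      = (fun t => (sf t + v ^ 2 * w t + lam * v + lam ^ 2 / (4 * w t)) * (-(1 / Real.sqrt 2)) + w t * (1 / Real.sqrt 2)) := by
    funext t; have := hw0 t; field_simp; ring
  have hfR4 : (fun t => (sf t + w t * (v + lam / (2 * w t)) ^ 2) * (1 / Real.sqrt 2) + w t * (1 / Real.sqrt 2))
      = (fun t => (sf t + v ^ 2 * w t + lam * v + lam ^ 2 / (4 * w t)) * (1 / Real.sqrt 2) + w t * (1 / Real.sqrt 2)) := by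
    funext t; have := hw0 t; field_simp; ring
  have eRU2 : deriv (fun t => Real.sqrt 2 * v * w t + Real.sqrt 2 * lam / 2) u
      = Real.sqrt 2 * v * deriv w u := ((dw.const_mul _).add_const _).deriv
  have hdivA : HasDerivAt (fun t => sf t + v ^ 2 * w t + lam * v + lam ^ 2 / (4 * w t))
      (b u * deriv w u + v ^ 2 * deriv w u - lam ^ 2 * deriv w u / (4 * (w u) ^ 2)) u := by
    have hq : HasDerivAt (fun t => lam ^ 2 / (4 * w t))
        ((0 * (4 * w u) - lam ^ 2 * (4 * deriv w u)) / (4 * w u) ^ 2) u :=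
      (hasDerivAt_const u (lam ^ 2)).div (dw.const_mul 4) (by simpa using hw0 u)
    have h := ((ds.add (dw.const_mul (v ^ 2))).add_const (lam * v)).add hq
    refine h.congr_deriv ?_
    have := hw0 u; field_simp; ring
  have eRU3 : deriv (fun t => (sf t + v ^ 2 * w t + lam * v + lam ^ 2 / (4 * w t)) * (-(1 / Real.sqrt 2)) + w t * (1 / Real.sqrt 2)) u
      = (b u * deriv w u + v ^ 2 * deriv w u - lam ^ 2 * deriv w u / (4 * (w u) ^ 2)) * (-(1 / Real.sqrt 2)) + deriv w u * (1 / Real.sqrt 2) :=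
    ((hdivA.mul_const _).add (dw.mul_const _)).deriv
  have eRU4 : deriv (fun t => (sf t + v ^ 2 * w t + lam * v + lam ^ 2 / (4 * w t)) * (1 / Real.sqrt 2) + w t * (1 / Real.sqrt 2)) u
      = (b u * deriv w u + v ^ 2 * deriv w u - lam ^ 2 * deriv w u / (4 * (w u) ^ 2)) * (1 / Real.sqrt 2) + deriv w u * (1 / Real.sqrt 2) :=
    ((hdivA.mul_const _).add (dw.mul_const _)).deriv
  have eRV1 : deriv (fun _ : ℝ => nf u) v = 0 := deriv_const _ _
  have eRV2 : deriv (fun s => Real.sqrt 2 * w u * (s + lam / (2 * w u))) v = Real.sqrt 2 * w u := by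
    have h : HasDerivAt (fun s : ℝ => Real.sqrt 2 * w u * (s + lam / (2 * w u))) (Real.sqrt 2 * w u * 1) v :=
      ((hasDerivAt_id v).add_const _).const_mul _
    rw [h.deriv]; ring
  have hIV : HasDerivAt (fun s : ℝ => sf u + w u * (s + lam / (2 * w u)) ^ 2)
      (w u * (2 * (v + lam / (2 * w u)))) v := by
    have h : HasDerivAt (fun s : ℝ => sf u + w u * (s + lam / (2 * w u)) ^ 2)
        (w u * (((2:ℕ) : ℝ) * (v + lam / (2 * w u)) ^ 1 * 1)) v :=
      ((((hasDerivAt_id v).add_const _).pow 2).const_mul (w u)).const_add _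
    convert h using 1; push_cast; ring
  have eRV3 : deriv (fun s => (sf u + w u * (s + lam / (2 * w u)) ^ 2) * (-(1 / Real.sqrt 2)) + w u * (1 / Real.sqrt 2)) v
      = (w u * (2 * (v + lam / (2 * w u)))) * (-(1 / Real.sqrt 2)) :=
    ((hIV.mul_const _).add_const _).deriv
  have eRV4 : deriv (fun s => (sf u + w u * (s + lam / (2 * w u)) ^ 2) * (1 / Real.sqrt 2) + w u * (1 / Real.sqrt 2)) v
      = (w u * (2 * (v + lam / (2 * w u)))) * (1 / Real.sqrt 2) :=
    ((hIV.mul_const _).add_const _).deriv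
  simp only [pderivU, pderivV, hX, hR, mdot]
  rw [hfR2, hfR3, hfR4, eXU2, eXU3, eXU4, eXV1, eXV2, eXV3, eXV4, eRU2, eRU3, eRU4,
    eRV1, eRV2, eRV3, eRV4, dn.deriv]
  refine ⟨?_, ?_, ?_⟩
  · have hwu := hw0 u
    have ex1 : (fun t => x t) = x := rfl
    rw [ex1]
    have key := hab u
    field_simp [hw' u] at key
    field_simp
    ring_nf
    ring_nf at key
    linear_combination (Real.sqrt 2 * Real.sqrt 2 *
        (32*(deriv x u)^2*(w u)^4 - 64*v^2*(deriv w u)^2*(w u)^4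
          - 64*(deriv w u)*(deriv z u)*(w u)^4 - 32*(a u)^2*(deriv w u)^2*(w u)^4)
      + 2*(32*(deriv x u)^2*(w u)^4 - 64*v^2*(deriv w u)^2*(w u)^4
          - 64*(deriv w u)*(deriv z u)*(w u)^4 - 32*(a u)^2*(deriv w u)^2*(w u)^4)
      + (128*v^2*(deriv w u)^2*(w u)^4 - 32*(deriv w u)^2*(w u)^2*lam^2
          + 128*(b u)*(deriv w u)^2*(w u)^4)
      + (-16*(2*Real.sqrt 2^2+3)*(deriv x u)^2*(w u)^4 + 32*(w u)^2*(deriv w u)^2*lam^2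
          + 64*Real.sqrt 2^2*(w u)^4*v^2*(deriv w u)^2 + 16*(2*Real.sqrt 2^2+3)*(w u)^4*(deriv w u)^2*(a u)^2
          - 128*(w u)^4*(deriv w u)^2*(b u) + 64*(Real.sqrt 2^2+2)*(w u)^4*(deriv w u)*(deriv z u))) * h2sq
      + (-16*(w u)^2) * key
  · have hwu := hw0 u
    field_simp
    ring
  · ring
end
end
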